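/- arXiv:1801.09507 — 2 statements merged into one kernel-verified Lean document; each statement's English description precedes it below -/
import Mathlib

section
/- If Q is a sub-rate matrix (Metzler with ∑ y, Q x y ≤ 0 for every x), then for every real t ≥ 0 and every x : ι, ∑ y, (Matrix.exp ℝ (t • Q)) x y ≤ 1. (Sub-stochasticity of the transition semigroup, underlying the mass statements in Theorem 2.5(ii) of the paper.) -/
/-!
Shifting a sub-rate matrix `Q` by `c • 1`, with `c` large, gives an entrywise nonnegative matrix
`B` with row sums at most `c`. The row sums of `B ^ n` are then at most `c ^ n`, so summing the
exponential series entrywise bounds the row sums of `exp B` by `Real.exp c`; since `c • 1` is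
central, `exp B = Real.exp c • exp Q`.
-/

/-- Mathlib's exponential, specialized to real matrices (`Matrix.exp ℝ`). -/
noncomputable def Matrix.exp (𝕂 : Type*) [Field 𝕂] {ι : Type*} [Fintype ι] [DecidableEq ι]
    [Algebra 𝕂 ℝ] (A : Matrix ι ι ℝ) : Matrix ι ι ℝ :=
  NormedSpace.exp A

open Finset

namespace Matrix

variable {ι : Type*} [Fintype ι] [DecidableEq ι]

theorem sum_pow_apply_le {B : Matrix ι ι ℝ} (hB : ∀ i j, 0 ≤ B i j) {r : ℝ}
    (hr : ∀ i, ∑ j, B i j ≤ r) (n : ℕ) (i : ι) : ∑ j, (B ^ n) i j ≤ r ^ n := by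
  induction n generalizing i with
  | zero => simp [one_apply]
  | succ n ih =>
    have hr0 : 0 ≤ r := (sum_nonneg fun j _ => hB i j).trans (hr i)
    calc ∑ j, (B ^ (n + 1)) i j = ∑ k, B i k * ∑ j, (B ^ n) k j := by
          simp only [pow_succ', mul_apply, mul_sum]; exact sum_comm
      _ ≤ ∑ k, B i k * r ^ n := by gcongr with k; exacts [hB i k, ih k]
      _ = (∑ k, B i k) * r ^ n := (sum_mul ..).symm
      _ ≤ r * r ^ n := by gcongr; exact hr i
      _ = r ^ (n + 1) := (pow_succ' r n).symm

theorem sum_exp_apply_le {B : Matrix ι ι ℝ} (hB : ∀ i j, 0 ≤ B i j) {r : ℝ}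
    (hr : ∀ i, ∑ j, B i j ≤ r) (i : ι) : ∑ j, NormedSpace.exp B i j ≤ Real.exp r := by
  have hB_series : HasSum (fun n => (n.factorial⁻¹ : ℝ) • B ^ n) (NormedSpace.exp B) := by
    open scoped Norms.Operator in exact NormedSpace.exp_series_hasSum_exp' B
  have hrow_series : HasSum (fun n => ∑ j, ((n.factorial⁻¹ : ℝ) • B ^ n) i j)
      (∑ j, NormedSpace.exp B i j) :=
    hasSum_sum fun j _ => Pi.hasSum.mp (Pi.hasSum.mp hB_series i) j
  rw [Real.exp_eq_exp_ℝ]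
  refine hasSum_le (fun n => ?_) hrow_series (NormedSpace.exp_series_hasSum_exp' (𝕂 := ℝ) r)
  simp only [smul_apply, smul_eq_mul, ← mul_sum]
  exact mul_le_mul_of_nonneg_left (sum_pow_apply_le hB hr n i) (by positivity)

theorem exp_add_smul_one (A : Matrix ι ι ℝ) (c : ℝ) :
    NormedSpace.exp (A + c • 1) = Real.exp c • NormedSpace.exp A := by
  have hscalar :
      NormedSpace.exp (algebraMap ℝ (Matrix ι ι ℝ) c) = algebraMap ℝ _ (Real.exp c) := by
    open scoped Norms.Operator in
    rw [Real.exp_eq_exp_ℝ]; exact (NormedSpace.algebraMap_exp_comm c).symm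
  rw [← Algebra.algebraMap_eq_smul_one, exp_add_of_commute _ _ (Algebra.commutes c A).symm,
    hscalar, ← Algebra.commutes, Algebra.smul_def]

theorem add_smul_one_apply_nonneg {Q : Matrix ι ι ℝ} (hQ : ∀ i j, i ≠ j → 0 ≤ Q i j) (i j : ι) :
    0 ≤ (Q + (∑ k, |Q k k|) • 1) i j := by
  rcases eq_or_ne i j with rfl | hij
  · have : |Q i i| ≤ ∑ k, |Q k k| := single_le_sum (fun k _ => abs_nonneg (Q k k)) (mem_univ i)
    simp only [add_apply, smul_apply, one_apply_eq, smul_eq_mul, mul_one]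
    linarith [neg_abs_le (Q i i)]
  · simpa [one_apply_ne hij] using hQ i j hij

theorem sum_exp_apply_le_one {Q : Matrix ι ι ℝ} (hQ : ∀ i j, i ≠ j → 0 ≤ Q i j)
    (hrow : ∀ i, ∑ j, Q i j ≤ 0) (i : ι) : ∑ j, NormedSpace.exp Q i j ≤ 1 := by
  set c := ∑ k, |Q k k|
  have hshift_row : ∀ i, ∑ j, (Q + c • 1) i j ≤ c := fun i => by
    simpa [sum_add_distrib, one_apply] using hrow i
  have hbound := sum_exp_apply_le (add_smul_one_apply_nonneg hQ) hshift_row i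
  simp only [exp_add_smul_one, smul_apply, smul_eq_mul, ← mul_sum] at hbound
  exact (mul_le_iff_le_one_right (Real.exp_pos c)).mp hbound

end Matrix

theorem matrix_exp_row_sum_le_one_of_subrate_general {ι : Type*} [Fintype ι] [DecidableEq ι]
    (Q : Matrix ι ι ℝ) (hMetzler : ∀ x y, x ≠ y → Q x y ≥ 0)
    (hrow : ∀ x, ∑ y, Q x y ≤ 0) :
    ∀ t : ℝ, 0 ≤ t → ∀ x : ι, ∑ y, Matrix.exp ℝ (t • Q) x y ≤ 1 := by
  intro t ht
  refine Matrix.sum_exp_apply_le_one (fun x y hxy => ?_) (fun x => ?_)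
  · exact mul_nonneg ht (hMetzler x y hxy)
  · simpa only [Matrix.smul_apply, smul_eq_mul, ← mul_sum] using
      mul_nonpos_of_nonneg_of_nonpos ht (hrow x)

/-- If `Q` is a sub-rate matrix (Metzler with nonpositive row sums), then the transition
semigroup `t ↦ exp (t • Q)` is sub-stochastic: the row sums are at most one for `t ≥ 0`. -/
theorem matrix_exp_row_sum_le_one_of_subrate {ι : Type*} [Fintype ι] [DecidableEq ι] [Nonempty ι]
    (Q : Matrix ι ι ℝ) (hMetzler : ∀ x y, x ≠ y → Q x y ≥ 0)
    (hrow : ∀ x, ∑ y, Q x y ≤ 0) :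
    ∀ t : ℝ, 0 ≤ t → ∀ x : ι, ∑ y, Matrix.exp ℝ (t • Q) x y ≤ 1 :=
  matrix_exp_row_sum_le_one_of_subrate_general Q hMetzler hrow
end

section
/- Let Q be Metzler and suppose the state x is absorbing, i.e., Q x y = 0 for all y : ι. Then for every z : ι the function t ↦ (Matrix.exp ℝ (t • Q)) z x is monotone nondecreasing on [0, ∞). (Basis of Theorem 2.6 of the paper: the probability that the auxiliary absorbed chain sits at an absorbing state x is a cumulative distribution function in t, so that μ([0,t], x) = p̂_t(x) is nondecreasing.) -/
open scoped Nat

namespace Matrix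

variable {ι : Type*}

def IsMetzler (A : Matrix ι ι ℝ) : Prop := ∀ i j, i ≠ j → 0 ≤ A i j

theorem IsMetzler.smul {A : Matrix ι ι ℝ} (hA : A.IsMetzler) {t : ℝ} (ht : 0 ≤ t) :
    (t • A).IsMetzler :=
  fun i j hij => mul_nonneg ht (hA i j hij)

variable [Fintype ι] [DecidableEq ι]

theorem exp_apply_eq_tsum (A : Matrix ι ι ℝ) (i j : ι) :
    NormedSpace.exp A i j = ∑' n : ℕ, (n !⁻¹ : ℝ) * (A ^ n) i j := by
  open scoped Norms.Operator in
  have hsum := NormedSpace.expSeries_summable' (𝕂 := ℝ) A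
  rw [congrFun (NormedSpace.exp_eq_tsum ℝ) A]
  exact (congrFun (tsum_apply hsum) j).trans (tsum_apply (Pi.summable.mp hsum i))

theorem exp_apply_nonneg_of_nonneg {A : Matrix ι ι ℝ} (hA : ∀ i j, 0 ≤ A i j) (i j : ι) :
    0 ≤ NormedSpace.exp A i j := by
  rw [exp_apply_eq_tsum]
  exact tsum_nonneg fun n => mul_nonneg (by positivity) (pow_apply_nonneg hA n i j)

theorem exp_apply_nonneg_of_isMetzler {A : Matrix ι ι ℝ} (hA : A.IsMetzler) (i j : ι) :
    0 ≤ NormedSpace.exp A i j := by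
  set c := ∑ k, |A k k|
  have hshift_nonneg : ∀ k l, 0 ≤ (A + c • 1) k l := by
    intro k l
    rcases eq_or_ne k l with rfl | hkl
    · have : |A k k| ≤ c :=
        Finset.single_le_sum (fun k _ => abs_nonneg (A k k)) (Finset.mem_univ k)
      simp only [add_apply, smul_apply, one_apply_eq, smul_eq_mul, mul_one]
      linarith [neg_abs_le (A k k)]
    · simpa [one_apply_ne hkl] using hA k l hkl
  have hexp : NormedSpace.exp A =
      NormedSpace.exp (A + c • 1) * diagonal fun _ => Real.exp (-c) := by
    have hsplit : A = (A + c • 1) + (-c) • 1 := by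
      rw [add_assoc, ← add_smul, add_neg_cancel, zero_smul, add_zero]
    conv_lhs => rw [hsplit]
    rw [exp_add_of_commute _ _ ((Commute.one_right _).smul_right _), smul_one_eq_diagonal (-c),
      exp_diagonal, Pi.exp_def, Real.exp_eq_exp_ℝ]
  rw [hexp, mul_diagonal]
  exact mul_nonneg (exp_apply_nonneg_of_nonneg hshift_nonneg i j) (Real.exp_pos _).le

theorem exp_apply_of_row_eq_zero {A : Matrix ι ι ℝ} {i : ι} (hA : ∀ j, A i j = 0) (j : ι) :
    NormedSpace.exp A i j = (1 : Matrix ι ι ℝ) i j := by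
  have hpow_row : ∀ n, (A ^ (n + 1)) i j = 0 := fun n => by
    simp [pow_succ', mul_apply, hA]
  rw [exp_apply_eq_tsum, tsum_eq_single 0 fun n hn => ?_]
  · simp
  · obtain ⟨m, rfl⟩ := Nat.exists_eq_succ_of_ne_zero hn
    rw [hpow_row, mul_zero]

theorem exp_add_smul (A : Matrix ι ι ℝ) (s t : ℝ) :
    NormedSpace.exp ((s + t) • A) = NormedSpace.exp (s • A) * NormedSpace.exp (t • A) := by
  rw [add_smul, exp_add_of_commute _ _ (((Commute.refl A).smul_left s).smul_right t)]

end Matrix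

open Matrix NormedSpace in
theorem matrix_exp_absorbing_monotone_general {ι : Type*} [Fintype ι] [DecidableEq ι]
    (Q : Matrix ι ι ℝ) (hMetzler : ∀ x y, x ≠ y → Q x y ≥ 0)
    (x : ι) (habs : ∀ y, Q x y = 0) :
    ∀ z : ι, MonotoneOn (fun t : ℝ => Matrix.exp ℝ (t • Q) z x) (Set.Ici (0 : ℝ)) := by
  intro z s hs t _ hst
  obtain ⟨r, hr, rfl⟩ : ∃ r, 0 ≤ r ∧ t = s + r := ⟨t - s, sub_nonneg.2 hst, by ring⟩
  have hQ : Q.IsMetzler := hMetzler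
  have hxx : exp (r • Q) x x = 1 := by
    simpa using exp_apply_of_row_eq_zero (i := x) (A := r • Q) (fun y => by simp [habs]) x
  show exp (s • Q) z x ≤ exp ((s + r) • Q) z x
  calc exp (s • Q) z x = exp (s • Q) z x * exp (r • Q) x x := by rw [hxx, mul_one]
    _ ≤ ∑ y, exp (s • Q) z y * exp (r • Q) y x :=
        Finset.single_le_sum (f := fun y => exp (s • Q) z y * exp (r • Q) y x)
          (fun y _ => mul_nonneg (exp_apply_nonneg_of_isMetzler (hQ.smul hs) z y)
            (exp_apply_nonneg_of_isMetzler (hQ.smul hr) y x)) (Finset.mem_univ x)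
    _ = exp ((s + r) • Q) z x := by rw [exp_add_smul, mul_apply]

/-- If `Q` is Metzler and the state `x` is absorbing (`Q x y = 0` for all `y`), then for
every `z` the map `t ↦ exp (t • Q) z x` is monotone nondecreasing on `[0, ∞)`. -/
theorem matrix_exp_absorbing_monotone {ι : Type*} [Fintype ι] [DecidableEq ι] [Nonempty ι]
    (Q : Matrix ι ι ℝ) (hMetzler : ∀ x y, x ≠ y → Q x y ≥ 0)
    (x : ι) (habs : ∀ y, Q x y = 0) :
    ∀ z : ι, MonotoneOn (fun t : ℝ => Matrix.exp ℝ (t • Q) z x) (Set.Ici (0 : ℝ)) :=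
  matrix_exp_absorbing_monotone_general Q hMetzler x habs
end
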